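/- Let q be a prime power, n ≥ 2, and let E be a subset of 𝔽_q^n that is Kakeya with respect to hyperplanes. Then |E| ≥ q^n − q^2. -/

import Mathlib

/-!
Let `C` be the complement of `E` and `m = |C|`. For every `a`, the map `x ↦ a ⬝ᵥ x` misses some
value on `C` (for `a = 0` since `q ≥ 2`, for `a ≠ 0` because `E` contains a hyperplane
`a ⬝ᵥ x = b`), so by Cauchy–Schwarz over the remaining `q - 1` values, at least `m² / (q - 1)`
pairs `(x, y) ∈ C²` satisfy `a ⬝ᵥ x = a ⬝ᵥ y`. Summed over all `a`, each pair is counted `q^n`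
times if `x = y` and `q^(n-1)` times otherwise, so `q^n m² ≤ (q - 1)(m q^n + m(m - 1) q^(n-1))`,
i.e. `m ≤ (q - 1)²`.
-/

open Finset Matrix Module

section Kakeya

variable (F : Type*) {V : Type*} [Field F] [AddCommGroup V] [Module F V]

def IsHyperplaneKakeya (E : Set V) : Prop :=
  ∀ w : Submodule F V, finrank F w = finrank F V - 1 → ∃ v : V, (v + ·) '' (w : Set V) ⊆ E

variable {F}

theorem IsHyperplaneKakeya.exists_preimage_singleton_subset [FiniteDimensional F V] {E : Set V}
    (hE : IsHyperplaneKakeya F E) {f : Dual F V} (hf : f ≠ 0) : ∃ b, f ⁻¹' {b} ⊆ E := by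
  obtain ⟨v, hv⟩ := hE (LinearMap.ker f) (by have := f.finrank_ker_add_one_of_ne_zero hf; omega)
  refine ⟨f v, fun x hx => hv ⟨x - v, ?_, add_sub_cancel v x⟩⟩
  simp_all [LinearMap.mem_ker]

theorem IsHyperplaneKakeya.exists_dotProduct_ne {ι : Type*} [Fintype ι] {E : Set (ι → F)}
    (hE : IsHyperplaneKakeya F E) (a : ι → F) : ∃ b, ∀ x ∉ E, a ⬝ᵥ x ≠ b := by
  classical
  rcases eq_or_ne a 0 with rfl | ha
  · exact ⟨1, fun x _ => by simp⟩
  · obtain ⟨b, hb⟩ :=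
      hE.exists_preimage_singleton_subset ((dotProductEquiv F ι).map_ne_zero_iff.mpr ha)
    exact ⟨b, fun x hx hxb => hx (hb hxb)⟩

theorem Module.Dual.card_mul_card_ker [Finite F] [Finite V] {f : Dual F V} (hf : f ≠ 0) :
    Nat.card F * Nat.card (LinearMap.ker f) = Nat.card V := by
  rw [natCard_eq_pow_finrank (K := F) (V := LinearMap.ker f),
    natCard_eq_pow_finrank (K := F) (V := V), ← f.finrank_ker_add_one_of_ne_zero hf, pow_succ']

end Kakeya

section Collisions

variable {α β : Type*} [DecidableEq β] [Fintype β]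

theorem sum_card_fiber_sq (s : Finset α) (g : α → β) :
    ∑ c, #{x ∈ s | g x = c} ^ 2 = ∑ x ∈ s, #{y ∈ s | g y = g x} := by
  calc ∑ c, #{x ∈ s | g x = c} ^ 2 = ∑ c, ∑ x ∈ s with g x = c, #{y ∈ s | g y = c} := by
        simp only [sum_const, smul_eq_mul, sq]
    _ = ∑ x ∈ s, #{y ∈ s | g y = g x} := sum_fiberwise' s g _

theorem sq_card_le_mul_sum_card_fiber_of_forall_ne {s : Finset α} {g : α → β} {b : β}
    (hb : ∀ x ∈ s, g x ≠ b) :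
    #s ^ 2 ≤ (Fintype.card β - 1) * ∑ x ∈ s, #{y ∈ s | g y = g x} := by
  rw [← sum_card_fiber_sq]
  calc #s ^ 2 = (∑ c ∈ univ.erase b, #{x ∈ s | g x = c}) ^ 2 := by
        rw [← card_eq_sum_card_fiberwise fun x hx => mem_erase.2 ⟨hb x hx, mem_univ _⟩]
    _ ≤ #(univ.erase b) * ∑ c ∈ univ.erase b, #{x ∈ s | g x = c} ^ 2 :=
        sq_sum_le_card_mul_sum_sq
    _ ≤ (Fintype.card β - 1) * ∑ c, #{x ∈ s | g x = c} ^ 2 := by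
        rw [card_erase_of_mem (mem_univ b), card_univ]
        gcongr
        exact subset_univ _

end Collisions

section DotProduct

variable {F ι : Type*} [Field F] [Fintype F] [Fintype ι]

theorem card_mul_card_filter_dotProduct_eq_of_ne [DecidableEq ι] [DecidableEq F] {x y : ι → F}
    (h : y ≠ x) :
    Fintype.card F * #{a : ι → F | a ⬝ᵥ y = a ⬝ᵥ x} = Fintype.card F ^ Fintype.card ι := by
  have hker : Nat.card (LinearMap.ker (dotProductEquiv F ι (y - x)))
      = #{a : ι → F | a ⬝ᵥ y = a ⬝ᵥ x} := by
    rw [← Fintype.card_subtype, ← Nat.card_eq_fintype_card]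
    exact Nat.card_congr (Equiv.subtypeEquivRight fun a => by
      simp [LinearMap.mem_ker, sub_eq_zero, dotProduct_comm])
  have := Module.Dual.card_mul_card_ker
    ((dotProductEquiv F ι).map_ne_zero_iff.mpr (sub_ne_zero.mpr h))
  rwa [hker, Nat.card_eq_fintype_card, Nat.card_eq_fintype_card, Fintype.card_fun] at this

theorem card_mul_sum_sum_card_filter_dotProduct_eq [DecidableEq ι] [DecidableEq F]
    (C : Finset (ι → F)) :
    Fintype.card F * ∑ x ∈ C, ∑ y ∈ C, #{a : ι → F | a ⬝ᵥ y = a ⬝ᵥ x} =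
      #C * (#C * Fintype.card F ^ Fintype.card ι
        + (Fintype.card F - 1) * Fintype.card F ^ Fintype.card ι) := by
  set q := Fintype.card F
  set N := q ^ Fintype.card ι
  have hpair : ∀ x y : ι → F,
      q * #{a : ι → F | a ⬝ᵥ y = a ⬝ᵥ x} = N + if y = x then (q - 1) * N else 0 := by
    intro x y
    split_ifs with h
    · rw [h, filter_true_of_mem fun _ _ => rfl, card_univ, Fintype.card_fun, ← one_add_mul,
        Nat.add_sub_cancel' (show 1 ≤ q from Fintype.card_pos)]
    · simpa using card_mul_card_filter_dotProduct_eq_of_ne h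
  simp only [mul_sum, hpair, sum_add_distrib, sum_const, smul_eq_mul, sum_ite_eq', sum_ite_mem,
    inter_self]
  ring

theorem card_le_sq_of_forall_exists_dotProduct_ne {C : Finset (ι → F)}
    (hC : ∀ a : ι → F, ∃ b, ∀ x ∈ C, a ⬝ᵥ x ≠ b) : #C ≤ (Fintype.card F - 1) ^ 2 := by
  classical
  set q := Fintype.card F
  set N := q ^ Fintype.card ι
  set m := #C
  set S := ∑ x ∈ C, ∑ y ∈ C, #{a : ι → F | a ⬝ᵥ y = a ⬝ᵥ x}
  have hCS : N * m ^ 2 ≤ (q - 1) * S := by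
    calc N * m ^ 2 = ∑ _a : ι → F, m ^ 2 := by simp [N, q]
      _ ≤ ∑ a : ι → F, (q - 1) * ∑ x ∈ C, #{y ∈ C | a ⬝ᵥ y = a ⬝ᵥ x} :=
          sum_le_sum fun a _ =>
            (hC a).elim fun _ hb => sq_card_le_mul_sum_card_fiber_of_forall_ne hb
      _ = (q - 1) * S := by
          rw [← mul_sum, sum_comm]
          exact congrArg _
            (sum_congr rfl fun x _ => sum_card_bipartiteAbove_eq_sum_card_bipartiteBelow _)
  have hcount : q * S = m * (m * N + (q - 1) * N) := card_mul_sum_sum_card_filter_dotProduct_eq C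
  obtain ⟨r, hr⟩ : ∃ r, q = r + 1 := ⟨q - 1, (Nat.sub_add_cancel Fintype.card_pos).symm⟩
  rw [hr, Nat.add_sub_cancel] at hCS hcount ⊢
  have hN : 0 < N := Nat.pow_pos Fintype.card_pos
  have hsq : N * (m * m) ≤ N * (r ^ 2 * m) := by
    nlinarith [Nat.mul_le_mul_left (r + 1) hCS]
  rcases Nat.eq_zero_or_pos m with hm | hm
  · simp [hm]
  · exact Nat.le_of_mul_le_mul_right (Nat.le_of_mul_le_mul_left hsq hN) hm

theorem IsHyperplaneKakeya.ncard_compl_le {E : Set (ι → F)} (hE : IsHyperplaneKakeya F E) :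
    Eᶜ.ncard ≤ (Fintype.card F - 1) ^ 2 := by
  classical
  rw [Set.ncard_eq_toFinset_card']
  exact card_le_sq_of_forall_exists_dotProduct_ne fun a =>
    (hE.exists_dotProduct_ne a).imp fun _ hb x hx => hb x (by simpa using hx)

end DotProduct

theorem kakeya_hyperplane_card_ge_q_pow_n_sub_q_sq_general
    (q n : ℕ)
    (F : Type*) [Field F] [Fintype F] (hF : Fintype.card F = q)
    (E : Set (Fin n → F))
    (hE : ∀ w : Submodule F (Fin n → F), Module.finrank F w = n - 1 →
      ∃ v : Fin n → F, (v + ·) '' (w : Set (Fin n → F)) ⊆ E) :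
    (q : ℝ) ^ n - q ^ 2 ≤ E.ncard := by
  have hKakeya : IsHyperplaneKakeya F E := fun w hw => hE w (by rwa [finrank_fin_fun] at hw)
  have hcompl : Eᶜ.ncard ≤ q ^ 2 :=
    hF ▸ hKakeya.ncard_compl_le.trans (Nat.pow_le_pow_left (Nat.sub_le _ _) 2)
  have hsum : E.ncard + Eᶜ.ncard = q ^ n := by
    rw [Set.ncard_add_ncard_compl, Nat.card_eq_fintype_card, Fintype.card_fun, Fintype.card_fin,
      hF]
  have : (q : ℝ) ^ n ≤ E.ncard + q ^ 2 := by exact_mod_cast hsum ▸ Nat.add_le_add_left hcompl _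
  linarith

/-- Let `q` be a prime power, `n ≥ 2`, and let `E ⊆ 𝔽_q^n` be Kakeya with
respect to hyperplanes. Then `|E| ≥ q^n - q^2`. -/
theorem kakeya_hyperplane_card_ge_q_pow_n_sub_q_sq
    (q n : ℕ) (hq : IsPrimePow q) (hn : 2 ≤ n)
    (F : Type*) [Field F] [Fintype F] (hF : Fintype.card F = q)
    (E : Set (Fin n → F))
    (hE : ∀ w : Submodule F (Fin n → F), Module.finrank F w = n - 1 →
      ∃ v : Fin n → F, (v + ·) '' (w : Set (Fin n → F)) ⊆ E) :
    (q : ℝ) ^ n - q ^ 2 ≤ E.ncard :=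
  kakeya_hyperplane_card_ge_q_pow_n_sub_q_sq_general q n F hF E hE
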